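/- arXiv:2412.04516 — 7 statements merged into one kernel-verified Lean document; each statement's English description precedes it below -/
import Mathlib

section
/- Let G be a torsion-free abelian group equipped with a linear order that is compatible with the group structure (i.e., G is a linearly ordered abelian group). Let M and N be matroids over G, both of the same rank n ≥ 1, such that: (1) every element of E(M) and every element of E(N) is strictly positive; (2) N is a sparse paving matroid; (3) |E(M)| = |E(N)| = n+1; (4) max(E(M)) ≤ n·min(E(N)), where n·y denotes the n-fold sum y + ⋯ + y. Then M is matched to N. -/
/-- A circuit of a matroid: a minimal dependent set. -/
def Matroid.IsCircuitOf {α : Type*} (M : Matroid α) (C : Set α) : Prop :=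
  M.Dep C ∧ ∀ D ⊂ C, ¬ M.Dep D

/-- A matroid is paving if every circuit has size at least the rank
(= the common size of all bases). -/
def Matroid.IsPaving {α : Type*} (M : Matroid α) : Prop :=
  ∀ C B, M.IsCircuitOf C → M.IsBase B → B.encard ≤ C.encard

/-- A matroid is sparse paving if both it and its dual are paving. -/
def Matroid.IsSparsePaving {α : Type*} (M : Matroid α) : Prop :=
  M.IsPaving ∧ M✶.IsPaving

/-- A matroid is loopless if every singleton of the ground set is independent. -/
def Matroid.IsLoopless {α : Type*} (M : Matroid α) : Prop :=
  ∀ x ∈ M.E, M.Indep {x}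

/-- `M` is matched to `N` (as matroids over an abelian group `G`) if every basis
of `M` is matched to some basis of `N`, i.e. there is a bijection `f` between them
with `a + f a ∉ E(M)` for all `a` in the basis of `M`. -/
def Matroid.MatchedTo {G : Type*} [AddCommGroup G] (M N : Matroid G) : Prop :=
  ∀ B, M.IsBase B → ∃ B', N.IsBase B' ∧
    ∃ f : G → G, Set.BijOn f B B' ∧ ∀ a ∈ B, a + f a ∉ M.E

/-! ### Auxiliary lemmas -/

/-- Every finite dependent set contains a circuit. -/
lemma aux_exists_circuit {α : Type*} (M : Matroid α) :
    ∀ (k : ℕ) (S : Set α), S.Finite → S.ncard ≤ k → M.Dep S →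
      ∃ C, C ⊆ S ∧ M.IsCircuitOf C := by
  intro k
  induction k with
  | zero =>
    intro S hfin hcard hdep
    have : S = ∅ := by
      rw [← Set.ncard_eq_zero hfin]; omega
    subst this
    exact absurd M.empty_indep hdep.not_indep
  | succ k ih =>
    intro S hfin hcard hdep
    by_cases h : ∀ D ⊂ S, ¬ M.Dep D
    · exact ⟨S, subset_rfl, hdep, h⟩
    · push_neg at h
      obtain ⟨D, hDS, hDdep⟩ := h
      have hDfin : D.Finite := hfin.subset hDS.subset
      have hlt : D.ncard < S.ncard := Set.ncard_lt_ncard hDS hfin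
      obtain ⟨C, hCD, hC⟩ := ih D hDfin (by omega) hDdep
      exact ⟨C, hCD.trans hDS.subset, hC⟩

/-- Greedy matching lemma, version without a distinguished target. -/
lemma aux_greedy0 {G : Type*} [LinearOrder G] [DecidableEq G] (B : Finset G) :
    ∀ (Nf : G → Finset G),
    (∀ a ∈ B, (B.filter (· ≤ a)).card ≤ (Nf a).card) →
    ∃ f : G → G, Set.InjOn f ↑B ∧ ∀ a ∈ B, f a ∈ Nf a := by
  induction B using Finset.strongInduction with
  | _ B ih =>
    intro Nf hdeg
    rcases B.eq_empty_or_nonempty with rfl | hne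
    · exact ⟨id, by simp, by simp⟩
    · set a₀ := B.min' hne with ha₀def
      have ha₀B : a₀ ∈ B := B.min'_mem hne
      have hNa₀ : (Nf a₀).Nonempty := by
        rw [← Finset.card_pos]
        have h1 : a₀ ∈ B.filter (· ≤ a₀) := by simp [ha₀B]
        have := hdeg a₀ ha₀B
        have := Finset.card_pos.2 ⟨a₀, h1⟩
        omega
      obtain ⟨y, hy⟩ := hNa₀
      have hss : B.erase a₀ ⊂ B := Finset.erase_ssubset ha₀B
      have hdeg' : ∀ a ∈ B.erase a₀,
          ((B.erase a₀).filter (· ≤ a)).card ≤ ((Nf a).erase y).card := by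
        intro a ha
        have haB : a ∈ B := Finset.mem_of_mem_erase ha
        have h1 : (B.erase a₀).filter (· ≤ a) = (B.filter (· ≤ a)).erase a₀ := by
          ext z
          simp only [Finset.mem_filter, Finset.mem_erase]
          tauto
        have h2 : a₀ ∈ B.filter (· ≤ a) := by
          simp only [Finset.mem_filter]
          exact ⟨ha₀B, B.min'_le a haB⟩
        have h3 : ((B.filter (· ≤ a)).erase a₀).card = (B.filter (· ≤ a)).card - 1 :=
          Finset.card_erase_of_mem h2
        have h4 : (Nf a).card - 1 ≤ ((Nf a).erase y).card := Finset.pred_card_le_card_erase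
        have h5 := hdeg a haB
        have h6 := Finset.card_pos.2 ⟨a₀, h2⟩
        rw [h1, h3]
        omega
      obtain ⟨f, hfinj, hf⟩ := ih (B.erase a₀) hss (fun a => (Nf a).erase y) hdeg'
      refine ⟨Function.update f a₀ y, ?_, ?_⟩
      · intro x1 h1 x2 h2 heq
        simp only [Finset.coe_erase, Finset.mem_coe] at *
        by_cases e1 : x1 = a₀ <;> by_cases e2 : x2 = a₀
        · rw [e1, e2]
        · exfalso
          rw [e1, Function.update_self, Function.update_of_ne e2] at heq
          have := hf x2 (Finset.mem_erase.2 ⟨e2, h2⟩)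
          rw [← heq] at this
          exact (Finset.mem_erase.1 this).1 rfl
        · exfalso
          rw [e2, Function.update_self, Function.update_of_ne e1] at heq
          have := hf x1 (Finset.mem_erase.2 ⟨e1, h1⟩)
          rw [heq] at this
          exact (Finset.mem_erase.1 this).1 rfl
        · rw [Function.update_of_ne e1, Function.update_of_ne e2] at heq
          exact hfinj (by simp [Finset.mem_erase, e1, h1]) (by simp [Finset.mem_erase, e2, h2]) heq
      · intro a ha
        by_cases e : a = a₀
        · rw [e, Function.update_self]; exact hy
        · rw [Function.update_of_ne e]
          exact Finset.mem_of_mem_erase (hf a (Finset.mem_erase.2 ⟨e, ha⟩))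

/-- Greedy matching lemma: if moreover `c₀` is a possible target of some `a ∈ B`,
the matching can be chosen to cover `c₀`. -/
lemma aux_greedy1 {G : Type*} [LinearOrder G] [DecidableEq G] (B : Finset G) :
    ∀ (Nf : G → Finset G) (c₀ : G),
    (∀ a ∈ B, (B.filter (· ≤ a)).card ≤ (Nf a).card) →
    (∃ a ∈ B, c₀ ∈ Nf a) →
    ∃ f : G → G, Set.InjOn f ↑B ∧ (∀ a ∈ B, f a ∈ Nf a) ∧ ∃ a ∈ B, f a = c₀ := by
  induction B using Finset.strongInduction with
  | _ B ih =>
    intro Nf c₀ hdeg hc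
    have hne : B.Nonempty := by
      obtain ⟨a, ha, _⟩ := hc; exact ⟨a, ha⟩
    set a₀ := B.min' hne with ha₀def
    have ha₀B : a₀ ∈ B := B.min'_mem hne
    have hNa₀ : (Nf a₀).Nonempty := by
      rw [← Finset.card_pos]
      have h1 : a₀ ∈ B.filter (· ≤ a₀) := by simp [ha₀B]
      have := hdeg a₀ ha₀B
      have := Finset.card_pos.2 ⟨a₀, h1⟩
      omega
    have hss : B.erase a₀ ⊂ B := Finset.erase_ssubset ha₀B
    -- choose y
    by_cases hcy : c₀ ∈ Nf a₀
    · -- give c₀ to a₀, match the rest by greedy0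
      have hdeg' : ∀ a ∈ B.erase a₀,
          ((B.erase a₀).filter (· ≤ a)).card ≤ ((Nf a).erase c₀).card := by
        intro a ha
        have haB : a ∈ B := Finset.mem_of_mem_erase ha
        have h1 : (B.erase a₀).filter (· ≤ a) = (B.filter (· ≤ a)).erase a₀ := by
          ext z
          simp only [Finset.mem_filter, Finset.mem_erase]
          tauto
        have h2 : a₀ ∈ B.filter (· ≤ a) := by
          simp only [Finset.mem_filter]
          exact ⟨ha₀B, B.min'_le a haB⟩
        have h3 : ((B.filter (· ≤ a)).erase a₀).card = (B.filter (· ≤ a)).card - 1 :=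
          Finset.card_erase_of_mem h2
        have h4 : (Nf a).card - 1 ≤ ((Nf a).erase c₀).card := Finset.pred_card_le_card_erase
        have h5 := hdeg a haB
        have h6 := Finset.card_pos.2 ⟨a₀, h2⟩
        rw [h1, h3]
        omega
      obtain ⟨f, hfinj, hf⟩ := aux_greedy0 (B.erase a₀) (fun a => (Nf a).erase c₀) hdeg'
      refine ⟨Function.update f a₀ c₀, ?_, ?_, ⟨a₀, ha₀B, Function.update_self _ _ _⟩⟩
      · intro x1 h1 x2 h2 heq
        simp only [Finset.mem_coe] at *
        by_cases e1 : x1 = a₀ <;> by_cases e2 : x2 = a₀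
        · rw [e1, e2]
        · exfalso
          rw [e1, Function.update_self, Function.update_of_ne e2] at heq
          have := hf x2 (Finset.mem_erase.2 ⟨e2, h2⟩)
          rw [← heq] at this
          exact (Finset.mem_erase.1 this).1 rfl
        · exfalso
          rw [e2, Function.update_self, Function.update_of_ne e1] at heq
          have := hf x1 (Finset.mem_erase.2 ⟨e1, h1⟩)
          rw [heq] at this
          exact (Finset.mem_erase.1 this).1 rfl
        · rw [Function.update_of_ne e1, Function.update_of_ne e2] at heq
          exact hfinj (by simp [Finset.mem_erase, e1, h1]) (by simp [Finset.mem_erase, e2, h2]) heq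
      · intro a ha
        by_cases e : a = a₀
        · rw [e, Function.update_self]; exact hcy
        · rw [Function.update_of_ne e]
          exact Finset.mem_of_mem_erase (hf a (Finset.mem_erase.2 ⟨e, ha⟩))
    · -- c₀ is not available for a₀; give a₀ some y and recurse keeping c₀
      obtain ⟨y, hy⟩ := hNa₀
      have hyne : y ≠ c₀ := by rintro rfl; exact hcy hy
      have hdeg' : ∀ a ∈ B.erase a₀,
          ((B.erase a₀).filter (· ≤ a)).card ≤ ((Nf a).erase y).card := by
        intro a ha
        have haB : a ∈ B := Finset.mem_of_mem_erase ha
        have h1 : (B.erase a₀).filter (· ≤ a) = (B.filter (· ≤ a)).erase a₀ := by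
          ext z
          simp only [Finset.mem_filter, Finset.mem_erase]
          tauto
        have h2 : a₀ ∈ B.filter (· ≤ a) := by
          simp only [Finset.mem_filter]
          exact ⟨ha₀B, B.min'_le a haB⟩
        have h3 : ((B.filter (· ≤ a)).erase a₀).card = (B.filter (· ≤ a)).card - 1 :=
          Finset.card_erase_of_mem h2
        have h4 : (Nf a).card - 1 ≤ ((Nf a).erase y).card := Finset.pred_card_le_card_erase
        have h5 := hdeg a haB
        have h6 := Finset.card_pos.2 ⟨a₀, h2⟩
        rw [h1, h3]
        omega
      have hc' : ∃ a ∈ B.erase a₀, c₀ ∈ (Nf a).erase y := by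
        obtain ⟨a₁, ha₁B, ha₁c⟩ := hc
        have ha₁ne : a₁ ≠ a₀ := by rintro rfl; exact hcy ha₁c
        exact ⟨a₁, Finset.mem_erase.2 ⟨ha₁ne, ha₁B⟩, Finset.mem_erase.2 ⟨Ne.symm hyne, ha₁c⟩⟩
      obtain ⟨f, hfinj, hf, a₁, ha₁, hfa₁⟩ :=
        ih (B.erase a₀) hss (fun a => (Nf a).erase y) c₀ hdeg' hc'
      refine ⟨Function.update f a₀ y, ?_, ?_, ?_⟩
      · intro x1 h1 x2 h2 heq
        simp only [Finset.mem_coe] at *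
        by_cases e1 : x1 = a₀ <;> by_cases e2 : x2 = a₀
        · rw [e1, e2]
        · exfalso
          rw [e1, Function.update_self, Function.update_of_ne e2] at heq
          have := hf x2 (Finset.mem_erase.2 ⟨e2, h2⟩)
          rw [← heq] at this
          exact (Finset.mem_erase.1 this).1 rfl
        · exfalso
          rw [e2, Function.update_self, Function.update_of_ne e1] at heq
          have := hf x1 (Finset.mem_erase.2 ⟨e1, h1⟩)
          rw [heq] at this
          exact (Finset.mem_erase.1 this).1 rfl
        · rw [Function.update_of_ne e1, Function.update_of_ne e2] at heq
          exact hfinj (by simp [Finset.mem_erase, e1, h1]) (by simp [Finset.mem_erase, e2, h2]) heq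
      · intro a ha
        by_cases e : a = a₀
        · rw [e, Function.update_self]; exact hy
        · rw [Function.update_of_ne e]
          exact Finset.mem_of_mem_erase (hf a (Finset.mem_erase.2 ⟨e, ha⟩))
      · refine ⟨a₁, Finset.mem_of_mem_erase ha₁, ?_⟩
        have ha₁ne : a₁ ≠ a₀ := (Finset.mem_erase.1 ha₁).1
        rw [Function.update_of_ne ha₁ne]
        exact hfa₁

/-- In a paving matroid of rank `n` with `n+1` elements, there is an element `c₀`
such that every `n`-subset of the ground set containing `c₀` is a base. -/
lemma aux_nbases {G : Type*} (N : Matroid G) (n : ℕ) (hn : 1 ≤ n)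
    (hrN : ∀ B, N.IsBase B → B.encard = n) (hpav : N.IsPaving)
    (hNE : N.E.encard = n + 1) :
    ∃ c₀ ∈ N.E, ∀ S, S ⊆ N.E → S.encard = n → c₀ ∈ S → N.IsBase S := by
  have hEfin : N.E.Finite := by
    apply Set.finite_of_encard_eq_coe (k := n + 1)
    rw [hNE]; push_cast; ring
  obtain ⟨B₀, hB₀⟩ := N.exists_isBase
  -- dependent sets have at least n elements
  have hdep_ge : ∀ S, S.Finite → N.Dep S → (n : ℕ∞) ≤ S.encard := by
    intro S hSfin hSdep
    obtain ⟨C, hCS, hC⟩ := aux_exists_circuit N S.ncard S hSfin le_rfl hSdep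
    have := hpav C B₀ hC hB₀
    rw [hrN B₀ hB₀] at this
    exact this.trans (Set.encard_mono hCS)
  -- independent n-sets are bases
  have hindep_base : ∀ S, S ⊆ N.E → S.encard = n → N.Indep S → N.IsBase S := by
    intro S hSE hScard hSind
    obtain ⟨B₁, hB₁, hSB₁⟩ := hSind.exists_isBase_superset
    have hB₁card : B₁.encard = n := hrN B₁ hB₁
    have hB₁fin : B₁.Finite := Set.finite_of_encard_eq_coe hB₁card
    have : S = B₁ := hB₁fin.eq_of_subset_of_encard_le' hSB₁ (by rw [hB₁card, hScard])
    rwa [this]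
  -- non-base n-sets are dependent
  have hdep : ∀ S, S ⊆ N.E → S.encard = n → ¬ N.IsBase S → N.Dep S := by
    intro S hSE hScard hSnb
    rw [N.dep_iff]
    exact ⟨fun h => hSnb (hindep_base S hSE hScard h), hSE⟩
  -- two distinct dependent n-sets are impossible
  have huniq : ∀ S S₀, S ⊆ N.E → S₀ ⊆ N.E → S.encard = n → S₀.encard = n →
      N.Dep S → N.Dep S₀ → S ≠ S₀ → False := by
    intro S S₀ hSE hS₀E hScard hS₀card hSdep hS₀dep hne
    have hSfin : S.Finite := Set.finite_of_encard_eq_coe hScard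
    have hS₀fin : S₀.Finite := Set.finite_of_encard_eq_coe hS₀card
    -- S ∪ S₀ = N.E
    have hx : ∃ x ∈ S₀, x ∉ S := by
      by_contra h
      push_neg at h
      have hsub : S₀ ⊆ S := h
      exact hne (hSfin.eq_of_subset_of_encard_le' hsub (by rw [hScard, hS₀card])).symm
    obtain ⟨x, hxS₀, hxS⟩ := hx
    have hins : insert x S ⊆ S ∪ S₀ := by
      intro z hz
      rcases hz with rfl | hz
      · exact Or.inr hxS₀
      · exact Or.inl hz
    have hUle : (S ∪ S₀).encard ≤ n + 1 := by
      rw [← hNE]; exact Set.encard_mono (Set.union_subset hSE hS₀E)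
    have hUge : (n : ℕ∞) + 1 ≤ (S ∪ S₀).encard := by
      have h1 : (insert x S).encard = (n : ℕ∞) + 1 := by
        rw [Set.encard_insert_of_notMem hxS, hScard]
      rw [← h1]; exact Set.encard_mono hins
    have hU : (S ∪ S₀).encard = n + 1 := le_antisymm hUle hUge
    have hUE : S ∪ S₀ = N.E :=
      hEfin.eq_of_subset_of_encard_le' (Set.union_subset hSE hS₀E) (by rw [hU, hNE])
    -- intersection has n - 1 elements
    have hIfin : (S ∩ S₀).Finite := hSfin.subset Set.inter_subset_left
    set m := hIfin.toFinset.card with hmdef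
    have hIcard : (S ∩ S₀).encard = (m : ℕ∞) := hIfin.encard_eq_coe_toFinset_card
    have hkey := Set.encard_union_add_encard_inter S S₀
    rw [hU, hScard, hS₀card, hIcard] at hkey
    have hkeyN : n + 1 + m = n + n := by exact_mod_cast hkey
    -- the intersection is independent
    have hIind : N.Indep (S ∩ S₀) := by
      apply Matroid.indep_of_not_dep _ (Set.inter_subset_left.trans hSE)
      intro hIdep
      have h1 := hdep_ge _ hIfin hIdep
      rw [hIcard] at h1
      have h2 : n ≤ m := by exact_mod_cast h1
      omega
    -- extend to a base B₁ = (S ∩ S₀) ∪ {t}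
    obtain ⟨B₁, hB₁, hIB₁⟩ := hIind.exists_isBase_superset
    have hB₁card : B₁.encard = n := hrN B₁ hB₁
    have hB₁fin : B₁.Finite := Set.finite_of_encard_eq_coe hB₁card
    have hdfin : (B₁ \ (S ∩ S₀)).Finite := hB₁fin.subset Set.diff_subset
    set d := hdfin.toFinset.card with hddef
    have hdcard : (B₁ \ (S ∩ S₀)).encard = (d : ℕ∞) := hdfin.encard_eq_coe_toFinset_card
    have hdiff : (B₁ \ (S ∩ S₀)).encard = 1 := by
      have h1 := Set.encard_diff_add_encard_of_subset hIB₁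
      rw [hIcard, hB₁card, hdcard] at h1
      have h2 : d + m = n := by exact_mod_cast h1
      have : d = 1 := by omega
      rw [hdcard, this]; norm_cast
    obtain ⟨t, ht⟩ := Set.encard_eq_one.1 hdiff
    have hB₁eq : B₁ = (S ∩ S₀) ∪ {t} := by
      rw [← ht, Set.union_diff_cancel hIB₁]
    have htB₁ : t ∈ B₁ := by rw [hB₁eq]; exact Or.inr rfl
    have htE : t ∈ S ∪ S₀ := by rw [hUE]; exact hB₁.subset_ground htB₁
    rcases htE with htS | htS₀
    · -- B₁ ⊆ S hence B₁ = S, contradicting S dependent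
      have hB₁S : B₁ ⊆ S := by
        rw [hB₁eq]
        exact Set.union_subset Set.inter_subset_left (Set.singleton_subset_iff.2 htS)
      have : B₁ = S := hSfin.eq_of_subset_of_encard_le' hB₁S (by rw [hScard, hB₁card])
      rw [this] at hB₁
      exact hSdep.not_indep hB₁.indep
    · have hB₁S : B₁ ⊆ S₀ := by
        rw [hB₁eq]
        exact Set.union_subset Set.inter_subset_right (Set.singleton_subset_iff.2 htS₀)
      have : B₁ = S₀ := hS₀fin.eq_of_subset_of_encard_le' hB₁S (by rw [hS₀card, hB₁card])
      rw [this] at hB₁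
      exact hS₀dep.not_indep hB₁.indep
  -- conclude
  by_cases hall : ∀ S, S ⊆ N.E → S.encard = n → N.IsBase S
  · have hEne : N.E.Nonempty := by
      rw [Set.nonempty_iff_ne_empty]
      intro h
      rw [h, Set.encard_empty] at hNE
      exact absurd hNE.symm (by simp)
    obtain ⟨c₀, hc₀⟩ := hEne
    exact ⟨c₀, hc₀, fun S hS hScard _ => hall S hS hScard⟩
  · push_neg at hall
    obtain ⟨S₀, hS₀E, hS₀card, hS₀nb⟩ := hall
    have hS₀dep : N.Dep S₀ := hdep S₀ hS₀E hS₀card hS₀nb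
    have hS₀ne : S₀ ≠ N.E := by
      intro h
      rw [h, hNE] at hS₀card
      have h2 : n + 1 = n := by exact_mod_cast hS₀card
      omega
    obtain ⟨c₀, hc₀E, hc₀S₀⟩ := Set.exists_of_ssubset (hS₀E.ssubset_of_ne hS₀ne)
    refine ⟨c₀, hc₀E, fun S hSE hScard hc₀S => ?_⟩
    by_contra hSnb
    have hSdep : N.Dep S := hdep S hSE hScard hSnb
    exact huniq S S₀ hSE hS₀E hScard hS₀card hSdep hS₀dep
      (fun h => hc₀S₀ (h ▸ hc₀S))

/-- Theorem (sparse paving matchability over linearly ordered abelian groups). -/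
theorem sparse_paving_matchable {G : Type*} [AddCommGroup G] [LinearOrder G] [IsOrderedAddMonoid G]
    (M N : Matroid G) (hMl : M.IsLoopless) (hNl : N.IsLoopless)
    (n : ℕ) (hn : 1 ≤ n)
    (hrM : ∀ B, M.IsBase B → B.encard = n) (hrN : ∀ B, N.IsBase B → B.encard = n)
    (hMpos : ∀ x ∈ M.E, 0 < x) (hNpos : ∀ x ∈ N.E, 0 < x)
    (hsp : N.IsSparsePaving)
    (hME : M.E.encard = n + 1) (hNE : N.E.encard = n + 1)
    (hmax : ∀ x ∈ M.E, ∀ y ∈ N.E, x ≤ n • y) :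
    M.MatchedTo N := by
  classical
  intro B hB
  obtain ⟨c₀, hc₀E, hc₀⟩ := aux_nbases N n hn hrN hsp.1 hNE
  have hBE : B ⊆ M.E := hB.subset_ground
  have hBcard : B.encard = n := hrM B hB
  have hBfin : B.Finite := Set.finite_of_encard_eq_coe hBcard
  have hEMfin : M.E.Finite := by
    apply Set.finite_of_encard_eq_coe (k := n + 1)
    rw [hME]; push_cast; ring
  have hENfin : N.E.Finite := by
    apply Set.finite_of_encard_eq_coe (k := n + 1)
    rw [hNE]; push_cast; ring
  set Bf := hBfin.toFinset with hBfdef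
  set EMf := hEMfin.toFinset with hEMfdef
  set ENf := hENfin.toFinset with hENfdef
  have hBfcard : Bf.card = n := by
    have := hBfin.encard_eq_coe_toFinset_card
    rw [hBcard] at this
    exact_mod_cast this.symm
  have hEMfcard : EMf.card = n + 1 := by
    have := hEMfin.encard_eq_coe_toFinset_card
    rw [hME] at this
    exact_mod_cast (by push_cast at this ⊢; exact this.symm : ((EMf.card : ℕ∞)) = ((n+1 : ℕ) : ℕ∞))
  have hENfcard : ENf.card = n + 1 := by
    have := hENfin.encard_eq_coe_toFinset_card
    rw [hNE] at this
    exact_mod_cast (by push_cast at this ⊢; exact this.symm : ((ENf.card : ℕ∞)) = ((n+1 : ℕ) : ℕ∞))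
  set Nf : G → Finset G := fun a => ENf.filter (fun y => a + y ∉ M.E) with hNfdef
  -- degree condition
  have hdeg : ∀ a ∈ Bf, (Bf.filter (· ≤ a)).card ≤ (Nf a).card := by
    intro a haBf
    have haB : a ∈ B := hBfin.mem_toFinset.1 haBf
    have haE : a ∈ M.E := hBE haB
    have hsplitN : (ENf.filter (fun y => a + y ∈ M.E)).card + (Nf a).card = n + 1 := by
      rw [hNfdef]
      rw [Finset.card_filter_add_card_filter_not (p := fun y => a + y ∈ M.E)]
      exact hENfcard
    have hsplitM : (EMf.filter (fun x => a < x)).card + (EMf.filter (fun x => ¬ a < x)).card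
        = n + 1 := by
      rw [Finset.card_filter_add_card_filter_not (p := fun x => a < x)]
      exact hEMfcard
    have hbad : (ENf.filter (fun y => a + y ∈ M.E)).card ≤ (EMf.filter (fun x => a < x)).card := by
      apply Finset.card_le_card_of_injOn (fun y => a + y)
      · intro y hy
        simp only [Finset.mem_coe, Finset.mem_filter] at hy ⊢
        have hyE : y ∈ N.E := hENfin.mem_toFinset.1 hy.1
        refine ⟨hEMfin.mem_toFinset.2 hy.2, ?_⟩
        exact lt_add_of_pos_right a (hNpos y hyE)
      · intro y1 _ y2 _ h
        exact add_left_cancel h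
    have hBsub : Bf.filter (· ≤ a) ⊆ EMf.filter (fun x => ¬ a < x) := by
      intro x hx
      simp only [Finset.mem_filter] at hx ⊢
      exact ⟨hEMfin.mem_toFinset.2 (hBE (hBfin.mem_toFinset.1 hx.1)), not_lt.2 hx.2⟩
    have hBle := Finset.card_le_card hBsub
    omega
  -- c₀ is a possible target for some a ∈ B
  have hc : ∃ a ∈ Bf, c₀ ∈ Nf a := by
    by_contra h
    push_neg at h
    have hall : ∀ a ∈ B, a + c₀ ∈ M.E := by
      intro a haB
      have haBf : a ∈ Bf := hBfin.mem_toFinset.2 haB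
      have := h a haBf
      rw [hNfdef] at this
      simp only [Finset.mem_filter, not_and, not_not] at this
      exact this (hENfin.mem_toFinset.2 hc₀E)
    -- sum argument
    have hEMne : EMf.Nonempty := by
      rw [← Finset.card_pos, hEMfcard]; omega
    set m := EMf.min' hEMne with hmdef
    have hmE : m ∈ M.E := hEMfin.mem_toFinset.1 (EMf.min'_mem hEMne)
    have himg : Bf.image (fun a => a + c₀) ⊆ EMf.erase m := by
      intro z hz
      simp only [Finset.mem_image] at hz
      obtain ⟨a, haBf, rfl⟩ := hz
      have haB : a ∈ B := hBfin.mem_toFinset.1 haBf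
      refine Finset.mem_erase.2 ⟨?_, hEMfin.mem_toFinset.2 (hall a haB)⟩
      intro heq
      have hma : m ≤ a := EMf.min'_le a (hEMfin.mem_toFinset.2 (hBE haB))
      have hpos : 0 < c₀ := hNpos c₀ hc₀E
      have hlt : m < a + c₀ := lt_of_le_of_lt hma (lt_add_of_pos_right a hpos)
      rw [heq] at hlt
      exact lt_irrefl _ hlt
    have himgcard : (Bf.image (fun a => a + c₀)).card = n := by
      rw [Finset.card_image_of_injOn (fun y1 _ y2 _ h => add_right_cancel h), hBfcard]
    have herasecard : (EMf.erase m).card = n := by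
      rw [Finset.card_erase_of_mem (EMf.min'_mem hEMne), hEMfcard]
      omega
    have himgeq : Bf.image (fun a => a + c₀) = EMf.erase m :=
      Finset.eq_of_subset_of_card_le himg (by omega)
    -- the missing element e of M.E
    have hBfsub : Bf ⊆ EMf := by
      intro x hx
      exact hEMfin.mem_toFinset.2 (hBE (hBfin.mem_toFinset.1 hx))
    have hsd : (EMf \ Bf).card = 1 := by
      rw [Finset.card_sdiff_of_subset hBfsub, hEMfcard, hBfcard]; omega
    obtain ⟨e, he⟩ := Finset.card_eq_one.1 hsd
    have heE : e ∈ M.E := by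
      have : e ∈ EMf \ Bf := by rw [he]; exact Finset.mem_singleton_self e
      exact hEMfin.mem_toFinset.1 (Finset.mem_sdiff.1 this).1
    have henB : e ∉ Bf := by
      have : e ∈ EMf \ Bf := by rw [he]; exact Finset.mem_singleton_self e
      exact (Finset.mem_sdiff.1 this).2
    have hEMfeq : EMf = insert e Bf := by
      apply Finset.eq_of_subset_of_card_le
      · intro x hx
        by_cases hxB : x ∈ Bf
        · exact Finset.mem_insert_of_mem hxB
        · have : x ∈ EMf \ Bf := Finset.mem_sdiff.2 ⟨hx, hxB⟩
          rw [he, Finset.mem_singleton] at this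
          rw [this]; exact Finset.mem_insert_self e Bf
      · rw [Finset.card_insert_of_notMem henB, hEMfcard, hBfcard]
    -- sum computation
    have hsum1 : ∑ a ∈ Bf, (a + c₀) = (∑ a ∈ Bf, a) + n • c₀ := by
      rw [Finset.sum_add_distrib, Finset.sum_const, hBfcard]
    have hsum2 : ∑ a ∈ Bf, (a + c₀) = ∑ z ∈ EMf.erase m, z := by
      rw [← himgeq, Finset.sum_image (fun y1 _ y2 _ h => add_right_cancel h)]
    have hsum3 : m + ∑ z ∈ EMf.erase m, z = ∑ z ∈ EMf, z :=
      Finset.add_sum_erase EMf id (EMf.min'_mem hEMne)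
    have hsum4 : ∑ z ∈ EMf, z = e + ∑ a ∈ Bf, a := by
      rw [hEMfeq, Finset.sum_insert henB]
    -- combine: n • c₀ = e - m
    have hcomb : m + ((∑ a ∈ Bf, a) + n • c₀) = e + ∑ a ∈ Bf, a := by
      have h0 := hsum3
      rw [hsum4, ← hsum2, hsum1] at h0
      exact h0
    have hnc : n • c₀ + m = e := by
      have h2 : (∑ a ∈ Bf, a) + (n • c₀ + m) = (∑ a ∈ Bf, a) + e := by
        calc (∑ a ∈ Bf, a) + (n • c₀ + m) = m + ((∑ a ∈ Bf, a) + n • c₀) := by abel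
          _ = e + ∑ a ∈ Bf, a := hcomb
          _ = (∑ a ∈ Bf, a) + e := by abel
      exact add_left_cancel h2
    have hle : e ≤ n • c₀ := hmax e heE c₀ hc₀E
    have hmpos : 0 < m := hMpos m hmE
    have hlt : n • c₀ < e := by rw [← hnc]; exact lt_add_of_pos_right _ hmpos
    exact absurd hle (not_le.2 hlt)
  -- apply the greedy matching lemma
  obtain ⟨f, hfinj, hf, a₀, ha₀, hfa₀⟩ := aux_greedy1 Bf Nf c₀ hdeg hc
  have hBcoe : (Bf : Set G) = B := hBfin.coe_toFinset
  rw [hBcoe] at hfinj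
  refine ⟨f '' B, ?_, f, hfinj.bijOn_image, ?_⟩
  · apply hc₀ (f '' B)
    · intro z hz
      obtain ⟨a, haB, rfl⟩ := hz
      have := hf a (hBfin.mem_toFinset.2 haB)
      rw [hNfdef] at this
      exact hENfin.mem_toFinset.1 (Finset.mem_filter.1 this).1
    · rw [hfinj.encard_image, hBcard]
    · exact ⟨a₀, hBfin.mem_toFinset.1 ha₀, hfa₀⟩
  · intro a haB
    have := hf a (hBfin.mem_toFinset.2 haB)
    rw [hNfdef] at this
    exact (Finset.mem_filter.1 this).2
end

section
/- Let G be a linearly ordered abelian group, let 0 < a be an element of G, let 1 ≤ n ≤ m be integers, and let S and S' be n-element subsets of [m]_a. Then the extended Schubert matroid SM_m(a,S) is matched to the extended Schubert matroid SM_m(a,S') if and only if S' = {(m−n+1)a, (m−n+2)a, …, ma} (equivalently, if and only if every n-element subset of [m]_a is a basis of SM_m(a,S'), i.e., SM_m(a,S') is the uniform matroid of rank n on [m]_a). -/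
variable {G : Type*} [AddCommGroup G] [LinearOrder G] [IsOrderedAddMonoid G]

/-- `[m]_a = {a, 2a, …, ma}`, the set of the first `m` positive multiples of `a`. -/
def multSet (a : G) (m : ℕ) : Finset G :=
  (Finset.Icc 1 m).image (fun i : ℕ => i • a)

/-- `B` is a basis of the extended panhandle matroid `P_{n,s,m}(a)`:
an `n`-subset of `[m]_a` meeting `[s]_a` in at least `n - 1` elements. -/
def PanhandleBasis (a : G) (n s m : ℕ) (B : Finset G) : Prop :=
  B ⊆ multSet a m ∧ B.card = n ∧ n - 1 ≤ (B ∩ multSet a s).card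

/-- `T ⪯ S` : the `i`-th smallest element of `T` does not exceed the `i`-th
smallest element of `S`, for every `i`. -/
def DomLE (T S : Finset G) : Prop :=
  ∀ (i : ℕ) (hT : i < (T.sort (· ≤ ·)).length) (hS : i < (S.sort (· ≤ ·)).length),
    (T.sort (· ≤ ·))[i]'hT ≤ (S.sort (· ≤ ·))[i]'hS

/-- `T` is a basis of the extended Schubert matroid `SM_m(a, S)`:
an `n`-subset of `[m]_a` with `T ⪯ S`. -/
def SchubertBasis (a : G) (n m : ℕ) (S T : Finset G) : Prop :=
  T ⊆ multSet a m ∧ T.card = n ∧ DomLE T S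

/-- A matroid (given by its ground set `E` and its family `𝓑₁` of bases) is matched to a
matroid with basis family `𝓑₂` if every basis `B` with `𝓑₁ B` admits a basis `B'` with
`𝓑₂ B'` and a bijection `f : B → B'` such that `x + f x ∉ E` for all `x ∈ B`. -/
def FamMatchedTo (E : Finset G) (𝓑₁ 𝓑₂ : Finset G → Prop) : Prop :=
  ∀ B, 𝓑₁ B → ∃ B', 𝓑₂ B' ∧
    ∃ f : G → G, Set.BijOn f ↑B ↑B' ∧ ∀ x ∈ B, x + f x ∉ E

section Aux

variable {a : G}

lemma aux_strictMono (ha : 0 < a) : StrictMono (fun i : ℕ => i • a) :=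
  fun _ _ h => nsmul_lt_nsmul_left ha h

lemma aux_mono (ha : 0 < a) {i j : ℕ} (h : i ≤ j) : i • a ≤ j • a :=
  (aux_strictMono ha).monotone h

lemma mem_multSet_iff {m : ℕ} {x : G} :
    x ∈ multSet a m ↔ ∃ i, 1 ≤ i ∧ i ≤ m ∧ i • a = x := by
  simp [multSet, Finset.mem_image, Finset.mem_Icc, and_assoc]

/-- In a list whose consecutive gaps are at least `a`, entries `k` apart differ by
at least `k • a`. -/
lemma getElem_idx_congr (L : List G) {i j : ℕ} (h : i = j) (hi : i < L.length) :
    L[i]'hi = L[j]'(h ▸ hi) := by subst h; rfl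

lemma chain_gap (L : List G)
    (h : ∀ j, (hj : j + 1 < L.length) → L[j]'(by omega) + a ≤ L[j+1]'hj) :
    ∀ k i, (hik : i + k < L.length) → L[i]'(by omega) + k • a ≤ L[i+k]'hik := by
  intro k
  induction k with
  | zero => intro i hi; simp
  | succ k ih =>
    intro i hik
    have h1 := ih i (by omega)
    have h2 := h (i + k) (by omega)
    have : L[i]'(by omega) + (k+1) • a = (L[i]'(by omega) + k • a) + a := by
      rw [succ_nsmul, add_assoc]
    rw [this]
    exact le_trans (add_le_add_left h1 a) h2

/-- The two key bounds on the sorted list of a finset all of whose elements are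
multiples `k • a` with `c ≤ k ≤ m`. -/
lemma sort_bound (ha : 0 < a) {m c : ℕ} {T : Finset G}
    (hT : ∀ x ∈ T, ∃ k, c ≤ k ∧ k ≤ m ∧ k • a = x)
    (i : ℕ) (hi : i < (T.sort (· ≤ ·)).length) :
    (c + i) • a ≤ (T.sort (· ≤ ·))[i]'hi ∧
      (T.sort (· ≤ ·))[i]'hi + ((T.sort (· ≤ ·)).length - 1 - i) • a ≤ m • a := by
  set L := T.sort (· ≤ ·) with hLdef
  have hmem : ∀ j, (hj : j < L.length) → ∃ k, c ≤ k ∧ k ≤ m ∧ k • a = L[j]'hj := by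
    intro j hj
    exact hT _ ((Finset.mem_sort _).mp (List.getElem_mem hj))
  have hadj : ∀ j, (hj : j + 1 < L.length) → L[j]'(by omega) + a ≤ L[j+1]'hj := by
    intro j hj
    obtain ⟨k1, _, _, hk1⟩ := hmem j (by omega)
    obtain ⟨k2, _, _, hk2⟩ := hmem (j+1) hj
    have hs : List.Pairwise (· < ·) L := by rw [hLdef]; exact (Finset.sortedLT_sort T).pairwise
    have hlt : L[j]'(by omega) < L[j+1]'hj := by
      have := hs.rel_get_of_lt (a := ⟨j, by omega⟩) (b := ⟨j+1, hj⟩) (by simp)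
      simpa using this
    rw [← hk1, ← hk2] at hlt ⊢
    have hk : k1 < k2 := (aux_strictMono ha).lt_iff_lt.mp hlt
    calc k1 • a + a = (k1 + 1) • a := (succ_nsmul a k1).symm
      _ ≤ k2 • a := aux_mono ha (by omega)
  constructor
  · obtain ⟨k, hck, _, hk⟩ := hmem 0 (by omega)
    have h0 : c • a ≤ L[0]'(by omega) := by rw [← hk]; exact aux_mono ha hck
    have := chain_gap L hadj i 0 (by omega)
    calc (c + i) • a = c • a + i • a := add_nsmul a c i
      _ ≤ L[0]'(by omega) + i • a := add_le_add_left h0 _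
      _ ≤ L[0 + i]'(by omega) := this
      _ = L[i]'hi := getElem_idx_congr L (by omega) _
  · have hlen : i + (L.length - 1 - i) < L.length := by omega
    have := chain_gap L hadj (L.length - 1 - i) i hlen
    obtain ⟨k, _, hkm, hk⟩ := hmem _ hlen
    refine le_trans this ?_
    rw [← hk]
    exact aux_mono ha hkm

/-- Every `n`-subset of `[m]_a` is dominated by the top set. -/
lemma domLE_top (ha : 0 < a) {m n : ℕ} (hn : 1 ≤ n) (hm : n ≤ m) {T : Finset G}
    (hTsub : T ⊆ multSet a m) (hTcard : T.card = n) :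
    DomLE T ((Finset.Icc (m - n + 1) m).image (fun i : ℕ => i • a)) := by
  intro i hT hS
  set P := (Finset.Icc (m - n + 1) m).image (fun i : ℕ => i • a) with hP
  have hTlen : (T.sort (· ≤ ·)).length = n := by rw [Finset.length_sort, hTcard]
  have hin : i < n := by omega
  have hb1 := (sort_bound ha (c := 1) (m := m)
    (fun x hx => by simpa using mem_multSet_iff.mp (hTsub hx)) i hT).2
  have hb2 := (sort_bound (T := P) ha (c := m - n + 1) (m := m)
    (fun x hx => by
      simp only [hP, Finset.mem_image, Finset.mem_Icc] at hx
      obtain ⟨k, ⟨hk1, hk2⟩, hk⟩ := hx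
      exact ⟨k, hk1, hk2, hk⟩) i hS).1
  rw [hTlen] at hb1
  have key : (T.sort (· ≤ ·))[i]'hT ≤ (m - n + 1 + i) • a := by
    have hsum : (m - n + 1 + i) + (n - 1 - i) = m := by omega
    have : (T.sort (· ≤ ·))[i]'hT + (n - 1 - i) • a ≤
        (m - n + 1 + i) • a + (n - 1 - i) • a := by
      rw [← add_nsmul, hsum]; exact hb1
    exact le_of_add_le_add_right this
  exact le_trans key hb2

end Aux

/-- Theorem: `SM_m(a, S)` is matched to `SM_m(a, S')` iff
`S' = {(m-n+1)a, …, ma}`, i.e. iff `SM_m(a, S')` is the uniform matroid of rank `n`. -/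
theorem schubert_matched_schubert_iff {G : Type*} [AddCommGroup G] [LinearOrder G] [IsOrderedAddMonoid G]
    (a : G) (ha : 0 < a) (n m : ℕ) (hn : 1 ≤ n) (hm : n ≤ m)
    (S : Finset G) (hS : S ⊆ multSet a m) (hScard : S.card = n)
    (S' : Finset G) (hS' : S' ⊆ multSet a m) (hS'card : S'.card = n) :
    FamMatchedTo (multSet a m) (SchubertBasis a n m S) (SchubertBasis a n m S') ↔
      S' = (Finset.Icc (m - n + 1) m).image (fun i : ℕ => i • a) := by
  have hinj : Function.Injective (fun i : ℕ => i • a) := (aux_strictMono ha).injective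
  set P := (Finset.Icc (m - n + 1) m).image (fun i : ℕ => i • a) with hPdef
  have hPsub : P ⊆ multSet a m := by
    apply Finset.image_subset_image
    intro k hk
    simp only [Finset.mem_Icc] at hk ⊢
    omega
  have hPcard : P.card = n := by
    rw [hPdef, Finset.card_image_of_injective _ hinj, Nat.card_Icc]; omega
  have hPmem : ∀ x ∈ P, ∃ k, m - n + 1 ≤ k ∧ k ≤ m ∧ k • a = x := by
    intro x hx
    simp only [hPdef, Finset.mem_image, Finset.mem_Icc] at hx
    obtain ⟨k, ⟨hk1, hk2⟩, hk⟩ := hx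
    exact ⟨k, hk1, hk2, hk⟩
  constructor
  · -- forward direction
    intro hmatch
    -- the bottom set is a basis of SM(S)
    set bot := (Finset.Icc 1 n).image (fun i : ℕ => i • a) with hbot
    have hbotsub : bot ⊆ multSet a m := by
      apply Finset.image_subset_image
      intro k hk
      simp only [Finset.mem_Icc] at hk ⊢
      omega
    have hbotcard : bot.card = n := by
      rw [hbot, Finset.card_image_of_injective _ hinj, Nat.card_Icc]; omega
    have hbotmem : ∀ x ∈ bot, ∃ k, 1 ≤ k ∧ k ≤ n ∧ k • a = x := by
      intro x hx
      simp only [hbot, Finset.mem_image, Finset.mem_Icc] at hx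
      obtain ⟨k, ⟨hk1, hk2⟩, hk⟩ := hx
      exact ⟨k, hk1, hk2, hk⟩
    have hbotdom : DomLE bot S := by
      intro i hT hSl
      have hblen : (bot.sort (· ≤ ·)).length = n := by rw [Finset.length_sort, hbotcard]
      have hin : i < n := by omega
      have hb1 := (sort_bound ha hbotmem i hT).2
      rw [hblen] at hb1
      have hb2 := (sort_bound (T := S) ha (c := 1) (m := m)
        (fun x hx => by simpa using mem_multSet_iff.mp (hS hx)) i hSl).1
      have key : (bot.sort (· ≤ ·))[i]'hT ≤ (1 + i) • a := by
        have hsum : (1 + i) + (n - 1 - i) = n := by omega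
        have : (bot.sort (· ≤ ·))[i]'hT + (n - 1 - i) • a ≤
            (1 + i) • a + (n - 1 - i) • a := by
          rw [← add_nsmul, hsum]; exact hb1
        exact le_of_add_le_add_right this
      exact le_trans key hb2
    obtain ⟨B', ⟨hB'sub, hB'card, hB'dom⟩, f, hbij, hf⟩ :=
      hmatch bot ⟨hbotsub, hbotcard, hbotdom⟩
    -- B' must equal the top set P
    have hB'P : B' ⊆ P := by
      intro y hy
      obtain ⟨x, hx, hxy⟩ := hbij.surjOn (by exact_mod_cast hy)
      have hxb : x ∈ bot := by exact_mod_cast hx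
      obtain ⟨i, hi1, hin, hix⟩ := hbotmem x hxb
      obtain ⟨j, hj1, hjm, hjy⟩ := mem_multSet_iff.mp (hB'sub hy)
      have hnot := hf x hxb
      rw [hxy, ← hix, ← hjy, ← add_nsmul] at hnot
      have hij : m + 1 ≤ i + j := by
        by_contra hc
        exact hnot (mem_multSet_iff.mpr ⟨i + j, by omega, by omega, rfl⟩)
      rw [hPdef]
      exact Finset.mem_image.mpr ⟨j, Finset.mem_Icc.mpr ⟨by omega, hjm⟩, hjy⟩
    have hB'eq : B' = P := Finset.eq_of_subset_of_card_le hB'P (by omega)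
    rw [hB'eq] at hB'dom
    -- now DomLE P S' and DomLE S' P give S' = P
    have hdom2 : DomLE S' P := domLE_top ha hn hm hS' hS'card
    have hlen : (S'.sort (· ≤ ·)).length = (P.sort (· ≤ ·)).length := by
      rw [Finset.length_sort, Finset.length_sort, hS'card, hPcard]
    have hsort : S'.sort (· ≤ ·) = P.sort (· ≤ ·) := by
      apply List.ext_getElem hlen
      intro i h1 h2
      exact le_antisymm (hdom2 i h1 h2) (hB'dom i h2 h1)
    have := congrArg List.toFinset hsort
    rwa [Finset.sort_toFinset, Finset.sort_toFinset] at this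
  · -- backward direction
    rintro rfl
    intro B hB
    obtain ⟨hBsub, hBcard, _⟩ := hB
    refine ⟨B.image (fun x => (m + 1) • a - x), ?_, fun x => (m + 1) • a - x, ?_, ?_⟩
    · -- it is a Schubert basis of SM(a, P)
      have hfinj : Function.Injective (fun x : G => (m + 1) • a - x) :=
        fun x y h => by simpa using sub_right_injective h
      have hsub : B.image (fun x => (m + 1) • a - x) ⊆ multSet a m := by
        intro y hy
        obtain ⟨x, hx, hxy⟩ := Finset.mem_image.mp hy
        obtain ⟨i, hi1, him, hix⟩ := mem_multSet_iff.mp (hBsub hx)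
        refine mem_multSet_iff.mpr ⟨m + 1 - i, by omega, by omega, ?_⟩
        rw [← hxy, ← hix]
        rw [eq_sub_iff_add_eq, ← add_nsmul]
        congr 1
        omega
      have hcard : (B.image (fun x => (m + 1) • a - x)).card = n := by
        rw [Finset.card_image_of_injective _ hfinj, hBcard]
      exact ⟨hsub, hcard, domLE_top ha hn hm hsub hcard⟩
    · rw [Finset.coe_image]
      have hinjOn : Set.InjOn (fun x : G => (m + 1) • a - x) ↑B :=
        fun x _ y _ h => by simpa using sub_right_injective h
      exact hinjOn.bijOn_image
    · intro x hx
      have : x + ((m + 1) • a - x) = (m + 1) • a := by abel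
      rw [this]
      intro hc
      obtain ⟨i, _, him, hi⟩ := mem_multSet_iff.mp hc
      have : i = m + 1 := hinj hi
      omega
end

section
/- Let G be an abelian group and let A and B be finite subsets of G with |A| = |B| = n, 0 ∉ B, and n < p(G) (i.e., every nontrivial finite subgroup of G has cardinality greater than n). Then there exists a matching from A to B. -/
/-!
Apply Hall's theorem to the candidate sets `t a = {b ∈ B | a + b ∉ A}`. If a nonempty `S ⊆ A` had
fewer than `|S|` candidates in total, say the set `N`, then `T = {0} ∪ (B \ N)` would satisfy
`S + T ⊆ A` with `|S| + |T| ≥ |A| + 2`. Since `|A|` is smaller than every nontrivial finite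
subgroup, the Cauchy–Davenport theorem for arbitrary groups gives `|S + T| ≥ |S| + |T| - 1 > |A|`,
a contradiction.
-/

open Finset
open scoped Pointwise

theorem Finset.exists_bijOn_of_forall_card_le_card_biUnion {α : Type*} [DecidableEq α]
    {A B : Finset α} {t : α → Finset α} (hBA : #B ≤ #A) (htB : ∀ a ∈ A, t a ⊆ B)
    (hall : ∀ s ⊆ A, #s ≤ #(s.biUnion t)) :
    ∃ f : α → α, Set.BijOn f A B ∧ ∀ a ∈ A, f a ∈ t a := by
  have hall_subtype (s : Finset A) : #s ≤ #(s.biUnion fun a ↦ t a) := by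
    have hs_sub : s.image Subtype.val ⊆ A := fun x hx ↦ by
      obtain ⟨a, -, rfl⟩ := mem_image.1 hx
      exact a.2
    simpa [card_image_of_injective _ Subtype.val_injective, image_biUnion] using
      hall _ hs_sub
  obtain ⟨f, hf_inj, hft⟩ :=
    (all_card_le_biUnion_card_iff_exists_injective fun a : A ↦ t a).1 hall_subtype
  let F : α → α := fun x ↦ if hx : x ∈ A then f ⟨x, hx⟩ else x
  have hF : ∀ a (ha : a ∈ A), F a = f ⟨a, ha⟩ := fun a ha ↦ dif_pos ha
  have hF_maps : Set.MapsTo F A B := fun a ha ↦ by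
    rw [mem_coe] at ha
    rw [hF a ha]
    exact htB a ha (hft ⟨a, ha⟩)
  have hF_inj : Set.InjOn F A := fun a ha b hb hab ↦ by
    rw [mem_coe] at ha hb
    rw [hF a ha, hF b hb] at hab
    exact congrArg Subtype.val (hf_inj hab)
  refine ⟨F, ⟨hF_maps, hF_inj, surjOn_of_injOn_of_card_le F hF_maps hF_inj hBA⟩, ?_⟩
  intro a ha
  rw [hF a ha]
  exact hft ⟨a, ha⟩

theorem AddMonoid.natCast_lt_minOrder_of_forall_lt_ncard {G : Type*} [AddGroup G] {n : ℕ}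
    (hp : ∀ H : AddSubgroup G, H ≠ ⊥ → (H : Set G).Finite → n < (H : Set G).ncard) :
    (n : ℕ∞) < AddMonoid.minOrder G := by
  rw [← ENat.add_one_le_iff (ENat.natCast_ne_top n), le_minOrder_iff_forall_addSubgroup]
  intro H hH hH_fin
  have h_card : n < Nat.card (H : Set G) := (Nat.card_coe_set_eq _).symm ▸ hp H hH hH_fin
  exact_mod_cast h_card

theorem Finset.card_add_card_le_of_add_subset {G : Type*} [AddGroup G] [DecidableEq G]
    {S T A : Finset G} (hS : S.Nonempty) (hT : T.Nonempty) (hA : (#A : ℕ∞) < AddMonoid.minOrder G)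
    (hST : S + T ⊆ A) : #S + #T ≤ #A + 1 := by
  have h_cd := (cauchy_davenport_minOrder_add hS hT).trans (Nat.cast_le.2 (card_le_card hST))
  have h_sum : #S + #T - 1 ≤ #A := by
    rcases min_le_iff.1 h_cd with h | h
    · exact absurd h hA.not_ge
    · exact_mod_cast h
  have := hS.card_pos
  omega

section Matching

variable {G : Type*} [AddGroup G] [DecidableEq G]

def matchCandidates (A B : Finset G) (a : G) : Finset G :=
  B.filter fun b ↦ a + b ∉ A

theorem card_le_card_biUnion_matchCandidates {A B s : Finset G} (h0 : (0 : G) ∉ B)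
    (hAB : #A ≤ #B) (hA : (#A : ℕ∞) < AddMonoid.minOrder G) (hs : s ⊆ A) :
    #s ≤ #(s.biUnion (matchCandidates A B)) := by
  obtain rfl | hs_ne := s.eq_empty_or_nonempty
  · simp
  set N := s.biUnion (matchCandidates A B)
  have hNB : N ⊆ B := biUnion_subset.2 fun _ _ ↦ filter_subset _ _
  have hT_card : #(insert 0 (B \ N)) = #B - #N + 1 := by
    rw [card_insert_of_notMem fun h ↦ h0 (mem_sdiff.1 h).1, card_sdiff_of_subset hNB]
  have hsT : s + insert 0 (B \ N) ⊆ A := by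
    intro x hx
    obtain ⟨a, ha, b, hb, rfl⟩ := mem_add.1 hx
    rcases mem_insert.1 hb with rfl | hb
    · simpa using hs ha
    · by_contra hab
      exact (mem_sdiff.1 hb).2 (mem_biUnion.2 ⟨a, ha, mem_filter.2 ⟨(mem_sdiff.1 hb).1, hab⟩⟩)
  have := card_add_card_le_of_add_subset hs_ne (insert_nonempty _ _) hA hsT
  have := card_le_card hNB
  omega

end Matching

/-- Theorem: if `A, B ⊆ G` are finite with `|A| = |B| = n`, `0 ∉ B`, and every
nontrivial finite subgroup of `G` has more than `n` elements (i.e. `n < p(G)`),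
then there is a matching from `A` to `B`, i.e. a bijection `f : A → B` with
`a + f a ∉ A` for all `a ∈ A`. -/
theorem matching_of_small {G : Type*} [AddCommGroup G]
    (A B : Finset G) (n : ℕ) (hA : A.card = n) (hB : B.card = n)
    (h0 : (0 : G) ∉ B)
    (hp : ∀ H : AddSubgroup G, H ≠ ⊥ → (H : Set G).Finite → n < (H : Set G).ncard) :
    ∃ f : G → G, Set.BijOn f ↑A ↑B ∧ ∀ a ∈ A, a + f a ∉ A := by
  classical
  have hA_min : (#A : ℕ∞) < AddMonoid.minOrder G :=
    hA ▸ AddMonoid.natCast_lt_minOrder_of_forall_lt_ncard hp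
  obtain ⟨f, hf, hf_cand⟩ := exists_bijOn_of_forall_card_le_card_biUnion (hB.trans hA.symm).le
    (fun _ _ ↦ filter_subset _ _)
    (fun s hs ↦ card_le_card_biUnion_matchCandidates h0 (hA.trans hB.symm).le hA_min hs)
  exact ⟨f, hf, fun a ha ↦ (mem_filter.1 (hf_cand a ha)).2⟩
end

section
/- Let G be an abelian group and let A be a nonempty finite subset of G. Then there exists a matching from A to itself if and only if 0 ∉ A. -/
/-!
If `0 ∈ A`, the element mapped to `0` gives `a + 0 ∈ A`. Conversely, if `0 ∉ A`, Hall's marriage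
theorem applies to the sets `{b ∈ A | a + b ∉ A}`: for `S ⊆ A`, the elements of `A` outside the
union of these sets over `a ∈ S` form a set `T ⊆ A` with `S + T ⊆ A`, and Scherk's theorem applied
to `S ∪ {0}` and `T ∪ {0}` gives `|S| + |T| ≤ |A|`.
-/

open Finset
open scoped Pointwise

namespace Finset

variable {G : Type*} [AddCommGroup G] [DecidableEq G]

lemma neg_mem_of_vadd_finset_subset {s : Finset G} {b : G} (hs : 0 ∈ s) (hb : b +ᵥ s ⊆ s) :
    -b ∈ s := by
  have hbs : b +ᵥ s = s := eq_of_subset_of_card_le hb (card_vadd_finset b s).ge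
  rw [← hbs, mem_vadd_finset] at hs
  obtain ⟨x, hx, hbx⟩ := hs
  rwa [← eq_neg_of_add_eq_zero_right hbx]

/-- **Scherk's theorem**, by induction on `|t|`: unless `s + t ⊆ s` (which forces `t = {0}`),
a Dyson transform shrinks `t`, preserves `|s| + |t|` and the hypotheses, and does not enlarge
`s + t`. -/
theorem card_add_card_le_card_add_add_one {s t : Finset G} (hs : 0 ∈ s) (ht : 0 ∈ t)
    (hst : ∀ x ∈ s, -x ∈ t → x = 0) : #s + #t ≤ #(s + t) + 1 := by
  induction hn : #t using Nat.strong_induction_on generalizing s t with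
  | _ n ih =>
  subst hn
  by_cases hstable : s + t ⊆ s
  · have ht0 : t ⊆ {0} := fun b hb => by
      have hbs : b +ᵥ s ⊆ s := (vadd_finset_subset_add hb).trans (add_comm t s ▸ hstable)
      simpa using hst _ (neg_mem_of_vadd_finset_subset hs hbs) (by rwa [neg_neg])
    have := card_le_card ht0
    have := card_le_card (subset_add_left s ht)
    rw [card_singleton] at *
    omega
  obtain ⟨e, he, b, hb, heb⟩ : ∃ e ∈ s, ∃ b ∈ t, e + b ∉ s := by
    simpa [not_subset, mem_add] using hstable
  have hsub := addDysonETransform.subset e (s, t)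
  have hcard := addDysonETransform.card e (s, t)
  simp only [addDysonETransform_fst, addDysonETransform_snd] at hsub hcard
  have h0 : (0 : G) ∈ t ∩ (-e +ᵥ s) := by simpa [mem_neg_vadd_finset_iff] using ⟨ht, he⟩
  have hlt : #(t ∩ (-e +ᵥ s)) < #t := by
    refine card_lt_card ((ssubset_iff_of_subset inter_subset_left).2 ⟨b, hb, ?_⟩)
    simpa [mem_neg_vadd_finset_iff, hb] using heb
  have hst' : ∀ y ∈ s ∪ (e +ᵥ t), -y ∈ t ∩ (-e +ᵥ s) → y = 0 := by
    intro y hy hny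
    rw [mem_inter, mem_neg_vadd_finset_iff, vadd_eq_add] at hny
    rw [mem_union, mem_vadd_finset] at hy
    obtain hy | ⟨b', hb', rfl⟩ := hy
    · exact hst y hy hny.1
    · have hb'0 : b' = 0 := by
        simpa using hst (-b') (by simpa using hny.2) (by rwa [neg_neg])
      subst hb'0
      simpa using hst e he (by simpa using hny.1)
  have := ih _ hlt (mem_union_left _ hs) h0 hst' rfl
  have := card_le_card hsub
  omega

theorem card_add_card_le_of_add_subset_s10 {A S T : Finset G} (h0 : (0 : G) ∉ A) (hSA : S ⊆ A)
    (hTA : T ⊆ A) (hST : S + T ⊆ A) : #S + #T ≤ #A := by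
  have hscherk := card_add_card_le_card_add_add_one (mem_insert_self 0 S)
      (mem_insert_self 0 T) fun x hx hnx => by
      rw [mem_insert] at hx hnx
      obtain rfl | hx := hx
      · rfl
      obtain hnx | hnx := hnx
      · exact neg_eq_zero.1 hnx
      · exact absurd (hST (add_mem_add hx hnx)) (by simpa using h0)
  have hsub : insert 0 S + insert 0 T ⊆ insert 0 A := by
    simp only [subset_iff, mem_add, mem_insert]
    rintro _ ⟨u, rfl | hu, v, rfl | hv, rfl⟩
    · simp
    · simpa using Or.inr (hTA hv)
    · simpa using Or.inr (hSA hu)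
    · exact Or.inr (hST (add_mem_add hu hv))
  have := card_le_card hsub
  have := card_insert_of_notMem h0
  have := card_insert_of_notMem (fun h => h0 (hSA h))
  have := card_insert_of_notMem (fun h => h0 (hTA h))
  omega

theorem exists_bijOn_extend {α : Type*} {s : Finset α} (g : s → α)
    (hg : Function.Injective g) (hgs : ∀ a, g a ∈ s) :
    ∃ f : α → α, Set.BijOn f s s ∧ ∀ a : s, f a = g a := by
  set f := Function.extend Subtype.val g id
  have hf : ∀ a : s, f a = g a := Subtype.val_injective.extend_apply g id
  have hmaps : Set.MapsTo f s s := fun x hx => (hf ⟨x, hx⟩).symm ▸ hgs _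
  refine ⟨f, (s.finite_toSet.injOn_iff_bijOn_of_mapsTo hmaps).1 fun x hx y hy hxy => ?_, hf⟩
  simpa using hg ((hf ⟨x, hx⟩).symm.trans (hxy.trans (hf ⟨y, hy⟩)))

theorem exists_injective_add_notMem {A : Finset G} (h0 : (0 : G) ∉ A) :
    ∃ g : A → G, Function.Injective g ∧ ∀ a, g a ∈ A ∧ (a : G) + g a ∉ A := by
  set t : A → Finset G := fun a => A.filter ((a : G) + · ∉ A)
  have hall : ∀ s : Finset A, #s ≤ #(s.biUnion t) := by
    intro s
    set S := s.map (Function.Embedding.subtype _)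
    set T := A.filter fun b => ∀ a ∈ S, a + b ∈ A
    have hSA : S ⊆ A := fun x hx => by
      obtain ⟨a, -, rfl⟩ := mem_map.1 hx
      exact a.2
    have hST : S + T ⊆ A := by
      simp only [subset_iff, mem_add, T, mem_filter]
      rintro _ ⟨a, ha, b, hb, rfl⟩
      exact hb.2 a ha
    have hbiUnion : s.biUnion t = A \ T := by
      ext b
      simp only [mem_biUnion, mem_filter, Subtype.exists, exists_and_right, mem_map,
        Function.Embedding.subtype_apply, exists_eq_right, forall_exists_index, mem_sdiff,
        not_and, not_forall, t, T, S]
      tauto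
    have hS : #S = #s := card_map _
    have := card_add_card_le_of_add_subset_s10 h0 hSA (filter_subset _ _) hST
    rw [hbiUnion, card_sdiff_of_subset (filter_subset _ _)]
    omega
  obtain ⟨g, hg, hgt⟩ := (all_card_le_biUnion_card_iff_exists_injective t).1 hall
  exact ⟨g, hg, fun a => mem_filter.1 (hgt a)⟩

end Finset

theorem self_matching_iff_general {G : Type*} [AddCommGroup G]
    (A : Finset G) :
    (∃ f : G → G, Set.BijOn f ↑A ↑A ∧ ∀ a ∈ A, a + f a ∉ A) ↔ (0 : G) ∉ A := by
  classical
  refine ⟨fun ⟨f, hf, hfA⟩ h0 => ?_, fun h0 => ?_⟩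
  · obtain ⟨a, ha, hfa⟩ := hf.surjOn h0
    exact hfA a ha (by rwa [hfa, add_zero])
  · obtain ⟨g, hg, hgA⟩ := exists_injective_add_notMem h0
    obtain ⟨f, hf, hfg⟩ := exists_bijOn_extend g hg fun a => (hgA a).1
    exact ⟨f, hf, fun a ha => hfg ⟨a, ha⟩ ▸ (hgA ⟨a, ha⟩).2⟩

/-- Theorem (Losonczy): a nonempty finite subset `A` of an abelian group `G` admits a
matching from `A` to itself (a bijection `f : A → A` with `a + f a ∉ A` for all
`a ∈ A`) if and only if `0 ∉ A`. -/
theorem self_matching_iff {G : Type*} [AddCommGroup G]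
    (A : Finset G) (hA : A.Nonempty) :
    (∃ f : G → G, Set.BijOn f ↑A ↑A ∧ ∀ a ∈ A, a + f a ∉ A) ↔ (0 : G) ∉ A :=
  self_matching_iff_general A
end

section
/- An abelian group G admits a linear order ≤ compatible with its group structure (i.e., such that a ≤ b implies a + c ≤ b + c for all a, b, c ∈ G) if and only if G is torsion-free (i.e., the only element of finite order in G is 0). -/
/-- Theorem (Levi): an abelian group `G` admits a linear order compatible with its
group structure (meaning `a ≤ b → a + c ≤ b + c`) if and only if `G` is torsion-free. -/
theorem exists_compatible_linear_order_iff_torsion_free {G : Type*} [AddCommGroup G] :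
    (∃ r : G → G → Prop, IsLinearOrder G r ∧ ∀ a b c : G, r a b → r (a + c) (b + c)) ↔
      (∀ g : G, g ≠ 0 → ¬IsOfFinAddOrder g) := by
  constructor
  · rintro ⟨r, hlin, hcomp⟩ g hg hfin
    obtain ⟨n, hn, hng⟩ := isOfFinAddOrder_iff_nsmul_eq_zero.mp hfin
    have htrans : ∀ a b c : G, r a b → r b c → r a c := fun a b c => hlin.trans a b c
    have hanti := hlin.antisymm
    have key : ∀ x : G, r 0 x → ∀ m : ℕ, 0 < m → m • x = 0 → x = 0 := by
      intro x hx m hm h0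
      have pos : ∀ k : ℕ, r 0 (k • x) := by
        intro k
        induction k with
        | zero => simpa using hlin.refl 0
        | succ k ih =>
          have := hcomp 0 (k • x) x ih
          rw [zero_add] at this
          have h2 := htrans 0 x (k • x + x) hx this
          rwa [succ_nsmul]
      obtain ⟨m', rfl⟩ := Nat.exists_eq_succ_of_ne_zero hm.ne'
      have h1 := hcomp 0 (m' • x) x (pos m')
      rw [zero_add, ← succ_nsmul, h0] at h1
      exact hanti x 0 h1 hx
    rcases hlin.total 0 g with h | h
    · exact hg (key g h n hn hng)
    · have h' : r 0 (-g) := by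
        have := hcomp g 0 (-g) h
        rwa [add_neg_cancel, zero_add] at this
      have : -g = 0 := key (-g) h' n hn (by rw [smul_neg, hng, neg_zero])
      exact hg (by simpa using this)
  · intro htf
    -- cones
    set S : Set (Set G) := {P | 0 ∈ P ∧ (∀ a ∈ P, ∀ b ∈ P, a + b ∈ P) ∧ ∀ a ∈ P, -a ∈ P → a = 0}
      with hS
    have h0S : ({0} : Set G) ∈ S := by
      refine ⟨rfl, ?_, ?_⟩ <;> simp
    obtain ⟨P, -, hPS, hmax⟩ := zorn_subset_nonempty S (fun c hcS hc hne => by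
      refine ⟨⋃₀ c, ⟨?_, ?_, ?_⟩, fun s hs => Set.subset_sUnion_of_mem hs⟩
      · obtain ⟨t, ht⟩ := hne
        exact ⟨t, ht, (hcS ht).1⟩
      · rintro a ⟨s, hs, has⟩ b ⟨t, ht, hbt⟩
        rcases hc.total hs ht with hst | hts
        · exact ⟨t, ht, (hcS ht).2.1 a (hst has) b hbt⟩
        · exact ⟨s, hs, (hcS hs).2.1 a has b (hts hbt)⟩
      · rintro a ⟨s, hs, has⟩ ⟨t, ht, hat⟩
        rcases hc.total hs ht with hst | hts
        · exact (hcS ht).2.2 a (hst has) hat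
        · exact (hcS hs).2.2 a has (hts hat)) {0} h0S
    obtain ⟨hP0, hPadd, hPcone⟩ := hPS
    have hnsmul : ∀ (k : ℕ) (p : G), p ∈ P → k • p ∈ P := by
      intro k p hp
      induction k with
      | zero => simpa using hP0
      | succ k ih => rw [succ_nsmul]; exact hPadd _ ih _ hp
    -- key extension lemma: if x ∉ P, then some positive multiple of x has its negative in P
    have ext : ∀ x : G, x ∉ P → ∃ k : ℕ, 0 < k ∧ -(k • x) ∈ P := by
      intro x hx
      set Q : Set G := {g | ∃ p ∈ P, ∃ n : ℕ, g = p + n • x} with hQ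
      have hPQ : P ⊆ Q := fun p hp => ⟨p, hp, 0, by simp⟩
      have hxQ : x ∈ Q := ⟨0, hP0, 1, by simp⟩
      have hQne : Q ≠ P := fun h => hx (h ▸ hxQ)
      have hQnS : Q ∉ S := fun hQS => hQne (le_antisymm (hmax hQS hPQ) hPQ)
      have : ¬ (∀ a ∈ Q, -a ∈ Q → a = 0) := by
        intro hcone
        exact hQnS ⟨hPQ hP0, by
          rintro a ⟨p, hp, m, rfl⟩ b ⟨q, hq, n, rfl⟩
          exact ⟨p + q, hPadd p hp q hq, m + n, by rw [add_smul]; abel⟩, hcone⟩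
      push_neg at this
      obtain ⟨a, ⟨p, hp, m, rfl⟩, ⟨q, hq, n, hn⟩, hane⟩ := this
      have heq : (p + q) + (m + n) • x = 0 := by
        have : -(p + m • x) = q + n • x := hn
        rw [add_smul]
        linear_combination (norm := abel_nf) -this
      rcases Nat.eq_zero_or_pos (m + n) with h | h
      · obtain ⟨rfl, rfl⟩ := Nat.add_eq_zero.mp h
        simp only [zero_smul, add_zero] at heq hane hn
        exact absurd (hPcone p hp (hn ▸ hq)) hane
      · refine ⟨m + n, h, ?_⟩
        have : -((m + n) • x) = p + q := by linear_combination (norm := abel_nf) -heq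
        rw [this]; exact hPadd p hp q hq
    -- totality of the cone
    have htot : ∀ x : G, x ∈ P ∨ -x ∈ P := by
      intro x
      by_contra hcon
      push_neg at hcon
      obtain ⟨hx, hnx⟩ := hcon
      obtain ⟨k, hk, hkx⟩ := ext x hx
      obtain ⟨l, hl, hlx⟩ := ext (-x) hnx
      rw [smul_neg, neg_neg] at hlx
      have h1 : (k * l) • x ∈ P := by
        rw [mul_smul]; exact hnsmul k _ hlx
      have h2 : -((k * l) • x) ∈ P := by
        rw [mul_comm, mul_smul, ← smul_neg]; exact hnsmul l _ hkx
      have hx0 : (k * l) • x = 0 := hPcone _ h1 h2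
      have : x = 0 := by
        by_contra hxne
        exact htf x hxne (isOfFinAddOrder_iff_nsmul_eq_zero.mpr
          ⟨k * l, Nat.mul_pos hk hl, hx0⟩)
      exact hx (this ▸ hP0)
    -- define the order
    refine ⟨fun a b => b - a ∈ P,
      { refl := fun a => by simpa using hP0
        trans := fun a b c hab hbc => by
          have := hPadd _ hbc _ hab
          rwa [sub_add_sub_cancel] at this
        antisymm := fun a b hab hba => by
          have : b - a = 0 := hPcone _ hab (by rwa [neg_sub])
          exact (sub_eq_zero.mp this).symm
        total := fun a b => by
          rcases htot (b - a) with h | h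
          · exact Or.inl h
          · exact Or.inr (by rwa [neg_sub] at h) },
      fun a b c hab => by simpa using hab⟩
end

section
/- Let G be a linearly ordered abelian group, let n ≥ 1 be an integer, let A be a finite subset of G with |A| = n+1 such that 0 < x for every x ∈ A, and let b ∈ G satisfy max(A) ≤ n·b, where n·b denotes the n-fold sum b + ⋯ + b. Then for every n-element subset A' of A, there exists a ∈ A' such that a + b ∉ A. Equivalently, for no n-element subset A' of A does the translate A' + b lie entirely inside A. -/
/-- Lemma: in a linearly ordered abelian group, if `A` is a finite set of `n + 1`
positive elements with `max A ≤ n • b`, then no `n`-element subset `A'` of `A` has its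
translate `A' + b` contained in `A`; that is, every `n`-element subset `A'` of `A`
contains an element `a` with `a + b ∉ A`. -/
theorem exists_translate_escape {G : Type*} [AddCommGroup G] [LinearOrder G] [IsOrderedAddMonoid G]
    (n : ℕ) (hn : 1 ≤ n)
    (A : Finset G) (hcard : A.card = n + 1) (hpos : ∀ x ∈ A, 0 < x)
    (b : G) (hb : ∀ x ∈ A, x ≤ n • b) :
    ∀ A' ⊆ A, A'.card = n → ∃ a ∈ A', a + b ∉ A := by
  intro A' hsub hcard'
  by_contra hcon
  push_neg at hcon
  have hAne : A.Nonempty := Finset.card_pos.mp (by omega)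
  set M := A.max' hAne with hM
  set m := A.min' hAne with hm
  have hMA : M ∈ A := A.max'_mem hAne
  have hmA : m ∈ A := A.min'_mem hAne
  have hbpos : 0 < b := by
    by_contra hble
    push_neg at hble
    have : n • b ≤ 0 := nsmul_nonpos hble n
    exact absurd (lt_of_lt_of_le (hpos m hmA) (hb m hmA)) (not_lt.mpr this)
  -- M ∉ A'
  have hMnot : M ∉ A' := by
    intro hMin
    have h1 : M + b ∈ A := hcon M hMin
    have h2 : M + b ≤ M := A.le_max' _ h1
    exact absurd h2 (not_le.mpr (lt_add_of_pos_right M hbpos))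
  -- A' = A.erase M
  have hA' : A' = A.erase M := by
    apply Finset.eq_of_subset_of_card_le
    · exact Finset.subset_erase.mpr ⟨hsub, hMnot⟩
    · rw [Finset.card_erase_of_mem hMA, hcard, hcard']; omega
  -- the image
  have hinj : Function.Injective (fun a : G => a + b) := add_left_injective b
  set B := A'.image (fun a => a + b) with hB
  have hBsub : B ⊆ A := by
    intro x hx
    obtain ⟨a, ha, rfl⟩ := Finset.mem_image.mp hx
    exact hcon a ha
  have hBcard : B.card = n := by
    rw [hB, Finset.card_image_of_injective _ hinj, hcard']
  have hmnot : m ∉ B := by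
    intro hmB
    obtain ⟨a, ha, hab⟩ := Finset.mem_image.mp hmB
    have hma : m ≤ a := A.min'_le a (hsub ha)
    have : a < m := hab ▸ lt_add_of_pos_right a hbpos
    exact absurd this (not_lt.mpr hma)
  have hBeq : B = A.erase m := by
    apply Finset.eq_of_subset_of_card_le
    · exact Finset.subset_erase.mpr ⟨hBsub, hmnot⟩
    · rw [Finset.card_erase_of_mem hmA, hcard, hBcard]; omega
  -- sums
  have hsumB : ∑ x ∈ B, x = (∑ a ∈ A', a) + n • b := by
    rw [hB, Finset.sum_image (fun a _ a' _ h => hinj h), Finset.sum_add_distrib,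
      Finset.sum_const, hcard']
  have h1 : M + ∑ x ∈ A.erase M, x = ∑ x ∈ A, x := Finset.add_sum_erase A id hMA
  have h2 : m + ∑ x ∈ A.erase m, x = ∑ x ∈ A, x := Finset.add_sum_erase A id hmA
  rw [hBeq] at hsumB
  rw [hA'] at hsumB
  have hMle : M ≤ n • b := hb M hMA
  have hmpos : 0 < m := hpos m hmA
  have key : M = m + n • b := by
    have h3 : M + ∑ x ∈ A.erase M, x = m + (∑ a ∈ A.erase M, a + n • b) := by
      rw [h1, ← h2, hsumB]
    have h4 : M + ∑ x ∈ A.erase M, x = (m + n • b) + ∑ x ∈ A.erase M, x := by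
      rw [h3]; abel
    exact add_right_cancel h4
  have h5 : m + n • b ≤ n • b := key ▸ hMle
  exact absurd (add_le_iff_nonpos_left.mp h5) (not_le.mpr hmpos)
end

section
/- Let 1 ≤ n ≤ m be integers and let S be an n-element subset of {1, …, m}. For an n-element subset T of {1, …, m}, write T ≤ S if the i-th smallest element of T does not exceed the i-th smallest element of S for every 1 ≤ i ≤ n. Then the family 𝓑 = {T ⊆ {1, …, m} : |T| = n and T ≤ S} is nonempty and satisfies the basis exchange property: for all B₁, B₂ ∈ 𝓑 and every x ∈ B₁ \ B₂, there exists y ∈ B₂ \ B₁ such that (B₁ \ {x}) ∪ {y} ∈ 𝓑. Hence 𝓑 is the basis system of a rank-n matroid on {1, …, m} (the Schubert matroid SM_m(S)). -/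
/-- `T ≤ S` in the dominance order: the `i`-th smallest element of `T` does not exceed
the `i`-th smallest element of `S`, for every `i`. -/
def DomLENat (T S : Finset ℕ) : Prop :=
  ∀ (i : ℕ) (hT : i < (T.sort (· ≤ ·)).length) (hS : i < (S.sort (· ≤ ·)).length),
    (T.sort (· ≤ ·))[i]'hT ≤ (S.sort (· ≤ ·))[i]'hS

/-- Membership in the basis family of the Schubert matroid `SM_m(S)`:
`n`-subsets `T` of `{1, …, m}` with `T ≤ S` in the dominance order. -/
def SchubertBasisNat (n m : ℕ) (S T : Finset ℕ) : Prop :=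
  T ⊆ Finset.Icc 1 m ∧ T.card = n ∧ DomLENat T S

def cnt (T : Finset ℕ) (k : ℕ) : ℕ := (T.filter (fun a => a ≤ k)).card

lemma cnt_eq_countP (T : Finset ℕ) (k : ℕ) :
    cnt T k = (T.sort (· ≤ ·)).countP (fun a => a ≤ k) := by
  classical
  have h : ((T.sort (· ≤ ·) : List ℕ) : Multiset ℕ) = T.val := Finset.sort_eq T (· ≤ ·)
  unfold cnt
  rw [← Multiset.coe_countP, h, Multiset.countP_eq_card_filter]
  rfl

lemma countP_zero_of_head (a k : ℕ) (t : List ℕ) (ha : ∀ b ∈ t, a ≤ b) (hak : ¬ a ≤ k) :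
    t.countP (fun a => a ≤ k) = 0 := by
  rw [List.countP_eq_zero]
  intro b hb
  have := ha b hb
  simp only [decide_eq_true_eq]
  omega

lemma sorted_getElem_le_iff (l : List ℕ) (hl : l.Pairwise (· ≤ ·)) (k : ℕ) :
    ∀ i (hi : i < l.length), (l[i]'hi ≤ k ↔ i < l.countP (fun a => a ≤ k)) := by
  induction l with
  | nil => intro i hi; simp at hi
  | cons a t ih =>
    rw [List.pairwise_cons] at hl
    obtain ⟨ha, ht⟩ := hl
    intro i hi
    rcases i with _ | i
    · simp only [List.getElem_cons_zero, List.countP_cons]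
      by_cases hak : a ≤ k
      · simp [hak]
      · rw [countP_zero_of_head a k t ha hak]
        simp [hak]
    · simp only [List.getElem_cons_succ, List.countP_cons]
      have hi' : i < t.length := by simpa using hi
      rw [ih ht i hi']
      by_cases hak : a ≤ k
      · simp [hak]
      · rw [countP_zero_of_head a k t ha hak]
        simp [hak]

lemma domLE_iff (T S : Finset ℕ) (hcard : T.card = S.card) :
    DomLENat T S ↔ ∀ k, cnt S k ≤ cnt T k := by
  have hTs := Finset.pairwise_sort T (· ≤ ·)
  have hSs := Finset.pairwise_sort S (· ≤ ·)
  have hTl : (T.sort (· ≤ ·)).length = T.card := Finset.length_sort _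
  have hSl : (S.sort (· ≤ ·)).length = S.card := Finset.length_sort _
  constructor
  · intro hdom k
    rw [cnt_eq_countP, cnt_eq_countP]
    by_cases hc : (S.sort (· ≤ ·)).countP (fun a => a ≤ k) = 0
    · omega
    · set c := (S.sort (· ≤ ·)).countP (fun a => a ≤ k) with hcdef
      have hcle : c ≤ (S.sort (· ≤ ·)).length := List.countP_le_length
      have h1 : c - 1 < (S.sort (· ≤ ·)).length := by omega
      have h2 : c - 1 < (T.sort (· ≤ ·)).length := by omega
      have hs : (S.sort (· ≤ ·))[c-1]'h1 ≤ k := by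
        rw [sorted_getElem_le_iff _ hSs k (c-1) h1]
        omega
      have ht : (T.sort (· ≤ ·))[c-1]'h2 ≤ k :=
        le_trans (hdom (c-1) h2 h1) hs
      rw [sorted_getElem_le_iff _ hTs k (c-1) h2] at ht
      omega
  · intro hcnt i hT hS'
    set k := (S.sort (· ≤ ·))[i]'hS' with hk
    have h1 : i < (S.sort (· ≤ ·)).countP (fun a => a ≤ k) := by
      rw [← sorted_getElem_le_iff _ hSs k i hS']
    have h2 : i < (T.sort (· ≤ ·)).countP (fun a => a ≤ k) := by
      have := hcnt k
      rw [cnt_eq_countP, cnt_eq_countP] at this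
      omega
    rw [← sorted_getElem_le_iff _ hTs k i hT] at h2
    exact h2

/-- Theorem: the family of bases of the Schubert matroid `SM_m(S)` is nonempty and
satisfies the basis exchange property, hence is the basis system of a rank-`n` matroid
on `{1, …, m}`. -/
theorem schubert_basis_exchange (n m : ℕ) (h1 : 1 ≤ n) (h2 : n ≤ m)
    (S : Finset ℕ) (hS : S ⊆ Finset.Icc 1 m) (hScard : S.card = n) :
    (∃ T, SchubertBasisNat n m S T) ∧
    (∀ B₁ B₂, SchubertBasisNat n m S B₁ → SchubertBasisNat n m S B₂ →
      ∀ x ∈ B₁ \ B₂, ∃ y ∈ B₂ \ B₁, SchubertBasisNat n m S (insert y (B₁.erase x))) := by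
  constructor
  · exact ⟨S, hS, hScard, fun i hT hS' => le_of_eq rfl⟩
  · rintro B₁ B₂ ⟨hB1m, hB1c, hB1d⟩ ⟨hB2m, hB2c, hB2d⟩ x hx
    rw [Finset.mem_sdiff] at hx
    obtain ⟨hxB1, hxB2⟩ := hx
    have hne : (B₂ \ B₁).Nonempty := by
      by_contra h
      rw [Finset.not_nonempty_iff_eq_empty, Finset.sdiff_eq_empty_iff_subset] at h
      have : B₂ = B₁ := Finset.eq_of_subset_of_card_le h (by omega)
      exact hxB2 (this ▸ hxB1)
    set y := (B₂ \ B₁).min' hne with hy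
    have hymem : y ∈ B₂ \ B₁ := Finset.min'_mem _ _
    obtain ⟨hyB2, hyB1⟩ := Finset.mem_sdiff.mp hymem
    have hyE : y ∉ B₁.erase x := fun h => hyB1 (Finset.mem_of_mem_erase h)
    have hcard' : (insert y (B₁.erase x)).card = n := by
      rw [Finset.card_insert_of_notMem hyE, Finset.card_erase_of_mem hxB1, hB1c]
      omega
    have hc1 : ∀ k, cnt S k ≤ cnt B₁ k := (domLE_iff B₁ S (by omega)).mp hB1d
    have hc2 : ∀ k, cnt S k ≤ cnt B₂ k := (domLE_iff B₂ S (by omega)).mp hB2d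
    refine ⟨y, hymem, ?_, hcard', ?_⟩
    · intro z hz
      rcases Finset.mem_insert.mp hz with rfl | hz
      · exact hB2m hyB2
      · exact hB1m (Finset.mem_of_mem_erase hz)
    · rw [domLE_iff _ S (by omega)]
      intro k
      by_cases hyk : y ≤ k
      · -- cnt B' k = cnt (erase) k + 1 ≥ cnt B₁ k ≥ cnt S k
        have he : cnt (insert y (B₁.erase x)) k = cnt (B₁.erase x) k + 1 := by
          unfold cnt
          rw [Finset.filter_insert, if_pos hyk,
            Finset.card_insert_of_notMem (fun h => hyE (Finset.mem_of_mem_filter _ h))]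
        have h3 : cnt B₁ k ≤ cnt (B₁.erase x) k + 1 := by
          unfold cnt
          have hsub : B₁.filter (fun a => a ≤ k) ⊆ insert x ((B₁.erase x).filter (fun a => a ≤ k)) := by
            intro z hz
            rw [Finset.mem_filter] at hz
            rcases eq_or_ne z x with rfl | hzx
            · exact Finset.mem_insert_self _ _
            · exact Finset.mem_insert_of_mem (Finset.mem_filter.mpr
                ⟨Finset.mem_erase.mpr ⟨hzx, hz.1⟩, hz.2⟩)
          calc (B₁.filter (fun a => a ≤ k)).card
              ≤ (insert x ((B₁.erase x).filter (fun a => a ≤ k))).card := Finset.card_le_card hsub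
            _ ≤ ((B₁.erase x).filter (fun a => a ≤ k)).card + 1 := Finset.card_insert_le _ _
        have := hc1 k
        omega
      · have he : cnt (insert y (B₁.erase x)) k = cnt (B₁.erase x) k := by
          unfold cnt
          rw [Finset.filter_insert, if_neg hyk]
        rw [he]
        by_cases hxk : x ≤ k
        · -- cnt S k ≤ cnt B₂ k ≤ cnt (erase x B₁) k
          have hsub : B₂.filter (fun a => a ≤ k) ⊆ (B₁.erase x).filter (fun a => a ≤ k) := by
            intro z hz
            rw [Finset.mem_filter] at hz
            obtain ⟨hzB2, hzk⟩ := hz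
            have hzB1 : z ∈ B₁ := by
              by_contra hzB1
              have : y ≤ z := Finset.min'_le _ _ (Finset.mem_sdiff.mpr ⟨hzB2, hzB1⟩)
              omega
            have hzx : z ≠ x := fun h => hxB2 (h ▸ hzB2)
            exact Finset.mem_filter.mpr ⟨Finset.mem_erase.mpr ⟨hzx, hzB1⟩, hzk⟩
          exact le_trans (hc2 k) (Finset.card_le_card hsub)
        · -- k < x: cnt (erase x B₁) k = cnt B₁ k
          have he2 : cnt (B₁.erase x) k = cnt B₁ k := by
            unfold cnt
            congr 1
            ext z
            simp only [Finset.mem_filter, Finset.mem_erase]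
            constructor
            · rintro ⟨⟨_, hz⟩, hzk⟩; exact ⟨hz, hzk⟩
            · rintro ⟨hz, hzk⟩
              exact ⟨⟨fun h => hxk (h ▸ hzk), hz⟩, hzk⟩
          rw [he2]; exact hc1 k
end
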